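/- Let A, B be real 3×3 matrices with AᵀA = 1, det A = 1, BᵀB = 1, det B = 1, let d : Fin 3 → ℝ, and set M = B * Matrix.diagonal d * A. Let Φ_M be the unique linear map on 2×2 complex matrices with Φ_M(σ_0) = σ_0 and Φ_M(∑_i r_i • σ_i) = ∑_i (M r)_i • σ_i for all r ∈ ℝ³, and let Φ_D be the unique linear map with Φ_D(σ_0) = σ_0 and Φ_D(σ_j) = d_j • σ_j for j = 1, 2, 3. Then Φ_M is completely positive if and only if Φ_D is completely positive. -/

import Mathlib

open scoped ComplexOrder Matrix

/-- The Pauli matrices `σ_0, σ_1, σ_2, σ_3`. -/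
def pauli : Fin 4 → Matrix (Fin 2) (Fin 2) ℂ :=
  ![!![1, 0; 0, 1], !![0, 1; 1, 0], !![0, -Complex.I; Complex.I, 0], !![1, 0; 0, -1]]

/-- `Φ` is completely positive: for every `m ≥ 1`, the map `id_m ⊗ Φ` (acting blockwise on
`m × m` block matrices with `N × N` blocks) maps positive semidefinite matrices to positive
semidefinite matrices. -/
def CompletelyPositive {N : ℕ}
    (Φ : Matrix (Fin N) (Fin N) ℂ → Matrix (Fin N) (Fin N) ℂ) : Prop :=
  ∀ m : ℕ, 1 ≤ m → ∀ M : Matrix (Fin m × Fin N) (Fin m × Fin N) ℂ, M.PosSemidef →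
    (Matrix.of fun p q : Fin m × Fin N =>
      Φ (Matrix.of fun a b : Fin N => M (p.1, a) (q.1, b)) p.2 q.2).PosSemidef

/-!
Writing `σ·r = ∑ rᵢ σᵢ` for `r ∈ ℝ³`, conjugation `X ↦ U X Uᴴ` by a unitary `U` acts on the
Pauli vectors `σ·r` through a rotation of `r`, and every rotation arises this way: by Euler
angles it suffices to treat rotations about the `z`-axis, realised by diagonal unitaries, and
about the `y`-axis, realised by real ones. Choosing `U`, `V` realising `A`, `B` and comparing
on the Pauli basis gives `Φ_M X = V Φ_D (U X Uᴴ) Vᴴ`. Complete positivity is invariant under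
such two-sided unitary conjugations, because `id ⊗ (X ↦ U X Uᴴ)` is conjugation by `1 ⊗ U`.
-/

open Matrix Complex
open scoped Kronecker

noncomputable def pauliVec (r : Fin 3 → ℝ) : Matrix (Fin 2) (Fin 2) ℂ := ∑ i, r i • pauli i.succ

lemma pauliVec_eq (r : Fin 3 → ℝ) :
    pauliVec r = !![(r 2 : ℂ), r 0 - r 1 * I; r 0 + r 1 * I, -r 2] := by
  ext i j
  fin_cases i <;> fin_cases j <;>
    simp [pauliVec, pauli, Fin.sum_univ_three, Complex.real_smul, mul_comm, sub_eq_add_neg]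

lemma pauliVec_single (j : Fin 3) : pauliVec (Pi.single j 1) = pauli j.succ := by
  fin_cases j <;> simp [pauliVec]

lemma pauli_zero : pauli 0 = 1 := by
  ext i j
  fin_cases i <;> fin_cases j <;> rfl

lemma span_pauli : Submodule.span ℂ (Set.range pauli) = ⊤ := by
  refine Submodule.eq_top_iff'.2 fun X => ?_
  have hX : X = ((X 0 0 + X 1 1) / 2) • pauli 0 + ((X 0 1 + X 1 0) / 2) • pauli 1
      + ((X 0 1 - X 1 0) * I / 2) • pauli 2 + ((X 0 0 - X 1 1) / 2) • pauli 3 := by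
    ext i j
    fin_cases i <;> fin_cases j <;> simp [pauli] <;> ring_nf <;> simp [I_sq] <;> ring
  have h : ∀ k, pauli k ∈ Submodule.span ℂ (Set.range pauli) :=
    fun k => Submodule.subset_span ⟨k, rfl⟩
  rw [hX]
  exact add_mem (add_mem (add_mem (Submodule.smul_mem _ _ (h 0)) (Submodule.smul_mem _ _ (h 1)))
    (Submodule.smul_mem _ _ (h 2))) (Submodule.smul_mem _ _ (h 3))

def RotatesPauli (U : Matrix (Fin 2) (Fin 2) ℂ) (R : Matrix (Fin 3) (Fin 3) ℝ) : Prop :=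
  ∀ r, U * pauliVec r * Uᴴ = pauliVec (R *ᵥ r)

lemma RotatesPauli.mul {U V : Matrix (Fin 2) (Fin 2) ℂ} {R S : Matrix (Fin 3) (Fin 3) ℝ}
    (hU : RotatesPauli U R) (hV : RotatesPauli V S) : RotatesPauli (U * V) (R * S) := by
  intro r
  rw [conjTranspose_mul, ← mulVec_mulVec, ← hU, ← hV]
  noncomm_ring

noncomputable def rotZ (t : ℝ) : Matrix (Fin 3) (Fin 3) ℝ :=
  !![Real.cos t, -Real.sin t, 0; Real.sin t, Real.cos t, 0; 0, 0, 1]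

noncomputable def rotY (t : ℝ) : Matrix (Fin 3) (Fin 3) ℝ :=
  !![Real.cos t, 0, Real.sin t; 0, 1, 0; -Real.sin t, 0, Real.cos t]

-- Conjugation is quadratic in `U`, so `U` is built from the half angle.
lemma exists_rotatesPauli_rotZ (t : ℝ) :
    ∃ U ∈ unitaryGroup (Fin 2) ℂ, RotatesPauli U (rotZ t) := by
  obtain ⟨θ, rfl⟩ : ∃ θ, t = 2 * θ := ⟨t / 2, by ring⟩
  have h := Real.sin_sq_add_cos_sq θ
  simp only [rotZ, Real.cos_two_mul', Real.sin_two_mul]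
  generalize Real.cos θ = c at *
  generalize Real.sin θ = s at *
  refine ⟨!![c - s * I, 0; 0, c + s * I], ?_, fun r => ?_⟩
  · rw [mem_unitaryGroup_iff]
    ext i j
    fin_cases i <;> fin_cases j <;> simp [Complex.ext_iff, Matrix.mul_apply] <;> grind
  · ext i j
    fin_cases i <;> fin_cases j <;>
      simp [pauliVec_eq, dotProduct, Fin.sum_univ_three, Complex.ext_iff, Matrix.mul_apply,
        pow_two] <;>
      grind

lemma exists_rotatesPauli_rotY (t : ℝ) :
    ∃ U ∈ unitaryGroup (Fin 2) ℂ, RotatesPauli U (rotY t) := by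
  obtain ⟨θ, rfl⟩ : ∃ θ, t = 2 * θ := ⟨t / 2, by ring⟩
  have h := Real.sin_sq_add_cos_sq θ
  simp only [rotY, Real.cos_two_mul', Real.sin_two_mul]
  generalize Real.cos θ = c at *
  generalize Real.sin θ = s at *
  refine ⟨!![(c : ℂ), -s; s, c], ?_, fun r => ?_⟩
  · rw [mem_unitaryGroup_iff]
    ext i j
    fin_cases i <;> fin_cases j <;> simp [Complex.ext_iff, Matrix.mul_apply] <;> grind
  · ext i j
    fin_cases i <;> fin_cases j <;>
      simp [pauliVec_eq, dotProduct, Fin.sum_univ_three, Complex.ext_iff, Matrix.mul_apply,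
        pow_two] <;>
      grind

lemma rotZ_mem_specialOrthogonalGroup (t : ℝ) : rotZ t ∈ specialOrthogonalGroup (Fin 3) ℝ := by
  have h := Real.sin_sq_add_cos_sq t
  refine mem_specialOrthogonalGroup_iff.2 ⟨(mem_orthogonalGroup_iff' _ _).2 ?_, ?_⟩
  · ext i j
    fin_cases i <;> fin_cases j <;> simp [rotZ, Matrix.mul_apply, Fin.sum_univ_three] <;> grind
  · simp [rotZ, det_fin_three]; grind

lemma rotY_mem_specialOrthogonalGroup (t : ℝ) : rotY t ∈ specialOrthogonalGroup (Fin 3) ℝ := by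
  have h := Real.sin_sq_add_cos_sq t
  refine mem_specialOrthogonalGroup_iff.2 ⟨(mem_orthogonalGroup_iff' _ _).2 ?_, ?_⟩
  · ext i j
    fin_cases i <;> fin_cases j <;> simp [rotY, Matrix.mul_apply, Fin.sum_univ_three] <;> grind
  · simp [rotY, det_fin_three]; grind

lemma Real.exists_cos_eq_sin_eq {x y : ℝ} (h : x ^ 2 + y ^ 2 = 1) :
    ∃ t : ℝ, Real.cos t = x ∧ Real.sin t = y := by
  obtain ⟨t, ht⟩ := (Complex.norm_eq_one_iff ⟨x, y⟩).1 <| by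
    rw [Complex.norm_def, Complex.normSq_mk, ← sq, ← sq, h, Real.sqrt_one]
  refine ⟨t, ?_, ?_⟩
  · simpa using congrArg Complex.re ht
  · simpa using congrArg Complex.im ht

lemma columns_orthonormal_of_mem_orthogonalGroup {S : Matrix (Fin 3) (Fin 3) ℝ}
    (hS : S ∈ orthogonalGroup (Fin 3) ℝ) (i j : Fin 3) :
    S 0 i * S 0 j + S 1 i * S 1 j + S 2 i * S 2 j = if i = j then 1 else 0 := by
  simpa [Matrix.mul_apply, Fin.sum_univ_three, Matrix.one_apply] using
    congrFun (congrFun ((mem_orthogonalGroup_iff' _ _).1 hS) i) j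

lemma exists_eq_rotZ_of_apply_two_two {S : Matrix (Fin 3) (Fin 3) ℝ}
    (hS : S ∈ specialOrthogonalGroup (Fin 3) ℝ) (h22 : S 2 2 = 1) : ∃ γ, S = rotZ γ := by
  obtain ⟨hSorth, hSdet⟩ := mem_specialOrthogonalGroup_iff.1 hS
  have hcol := columns_orthonormal_of_mem_orthogonalGroup hSorth
  have h02 : S 0 2 = 0 ∧ S 1 2 = 0 := by
    have := hcol 2 2; simp only [h22, if_true] at this; constructor <;> nlinarith
  have h20 : S 2 0 = 0 := by simpa [h02, h22] using hcol 0 2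
  have h21 : S 2 1 = 0 := by simpa [h02, h22] using hcol 1 2
  have h00 : S 0 0 ^ 2 + S 1 0 ^ 2 = 1 := by simpa [h20, sq] using hcol 0 0
  have h01 : S 0 0 * S 0 1 + S 1 0 * S 1 1 = 0 := by simpa [h20, h21] using hcol 0 1
  have hdet : S 0 0 * S 1 1 - S 0 1 * S 1 0 = 1 := by
    rw [det_fin_three, h02.1, h02.2, h20, h21, h22] at hSdet
    linear_combination hSdet
  obtain ⟨γ, hc, hs⟩ := Real.exists_cos_eq_sin_eq h00
  refine ⟨γ, ?_⟩
  ext i j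
  fin_cases i <;> fin_cases j <;> simp [rotZ, hc, hs, h02, h20, h21, h22]
  · linear_combination S 0 0 * h01 - S 0 1 * h00 - S 1 0 * hdet
  · linear_combination S 0 0 * hdet + S 1 0 * h01 - S 1 1 * h00

lemma exists_rotZ_mul_rotY_apply_two (n : Fin 3 → ℝ) (hn : n 0 ^ 2 + n 1 ^ 2 + n 2 ^ 2 = 1) :
    ∃ α β, ∀ i, (rotZ α * rotY β) i 2 = n i := by
  set z : ℂ := ⟨n 0, n 1⟩
  have hz : n 2 ^ 2 + ‖z‖ ^ 2 = 1 := by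
    rw [Complex.sq_norm, Complex.normSq_mk]; linear_combination hn
  obtain ⟨β, hc, hs⟩ := Real.exists_cos_eq_sin_eq hz
  refine ⟨z.arg, β, fun i => ?_⟩
  fin_cases i <;> simp [rotZ, rotY, Matrix.mul_apply, Fin.sum_univ_three, hc, hs]
  · rw [mul_comm]; exact Complex.norm_mul_cos_arg z
  · rw [mul_comm]; exact Complex.norm_mul_sin_arg z

lemma exists_euler_angles {R : Matrix (Fin 3) (Fin 3) ℝ}
    (hR : R ∈ specialOrthogonalGroup (Fin 3) ℝ) :
    ∃ α β γ, R = rotZ α * rotY β * rotZ γ := by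
  obtain ⟨hRorth, hRdet⟩ := mem_specialOrthogonalGroup_iff.1 hR
  obtain ⟨α, β, hQ⟩ := exists_rotZ_mul_rotY_apply_two (fun i => R i 2) (by
    simpa [sq] using columns_orthonormal_of_mem_orthogonalGroup hRorth 2 2)
  set Q := rotZ α * rotY β
  obtain ⟨hQorth, hQdet⟩ := mem_specialOrthogonalGroup_iff.1 <|
    mul_mem (rotZ_mem_specialOrthogonalGroup α) (rotY_mem_specialOrthogonalGroup β)
  rw [mem_orthogonalGroup_iff] at hQorth
  rw [mem_orthogonalGroup_iff'] at hRorth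
  have hS : Qᵀ * R ∈ specialOrthogonalGroup (Fin 3) ℝ := by
    refine mem_specialOrthogonalGroup_iff.2 ⟨(mem_orthogonalGroup_iff' _ _).2 ?_, ?_⟩
    · rw [transpose_mul, transpose_transpose, mul_assoc, ← mul_assoc Q, hQorth, one_mul, hRorth]
    · rw [det_mul, det_transpose, hQdet, hRdet, one_mul]
  have hS22 : (Qᵀ * R) 2 2 = 1 := by
    have := congrFun (congrFun hRorth 2) 2
    simpa [Matrix.mul_apply, hQ, Fin.sum_univ_three, sq] using this
  obtain ⟨γ, hγ⟩ := exists_eq_rotZ_of_apply_two_two hS hS22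
  refine ⟨α, β, γ, ?_⟩
  rw [← hγ, ← mul_assoc, hQorth, one_mul]

lemma exists_unitary_rotatesPauli {R : Matrix (Fin 3) (Fin 3) ℝ}
    (hR : R ∈ specialOrthogonalGroup (Fin 3) ℝ) :
    ∃ U ∈ unitaryGroup (Fin 2) ℂ, RotatesPauli U R := by
  obtain ⟨α, β, γ, rfl⟩ := exists_euler_angles hR
  obtain ⟨U₁, hU₁, h₁⟩ := exists_rotatesPauli_rotZ α
  obtain ⟨U₂, hU₂, h₂⟩ := exists_rotatesPauli_rotY β
  obtain ⟨U₃, hU₃, h₃⟩ := exists_rotatesPauli_rotZ γ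
  exact ⟨U₁ * U₂ * U₃, mul_mem (mul_mem hU₁ hU₂) hU₃, (h₁.mul h₂).mul h₃⟩

section IdTensor

variable {ι n R : Type*}

lemma submatrix_one_kronecker_mul_mul_conjTranspose [Fintype ι] [DecidableEq ι] [Fintype n]
    [CommSemiring R] [StarRing R] {n' : Type*} (U : Matrix n' n R) (M : Matrix (ι × n) (ι × n) R)
    (p q : ι) :
    (((1 : Matrix ι ι R) ⊗ₖ U) * M * ((1 : Matrix ι ι R) ⊗ₖ U)ᴴ).submatrix (Prod.mk p)
        (Prod.mk q) =
      U * M.submatrix (Prod.mk p) (Prod.mk q) * Uᴴ := by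
  ext a b
  simp [Matrix.mul_apply, Fintype.sum_prod_type, one_apply, Finset.sum_mul, apply_ite star]

lemma ext_submatrix_prodMk {A B : Matrix (ι × n) (ι × n) R}
    (h : ∀ p q, A.submatrix (Prod.mk p) (Prod.mk q) = B.submatrix (Prod.mk p) (Prod.mk q)) :
    A = B := by
  ext ⟨p, a⟩ ⟨q, b⟩
  exact congrFun (congrFun (h p q) a) b

def idTensor (Φ : Matrix n n R → Matrix n n R) (M : Matrix (ι × n) (ι × n) R) :
    Matrix (ι × n) (ι × n) R :=
  of fun p q => Φ (M.submatrix (Prod.mk p.1) (Prod.mk q.1)) p.2 q.2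

lemma submatrix_idTensor (Φ : Matrix n n R → Matrix n n R) (M : Matrix (ι × n) (ι × n) R)
    (p q : ι) :
    (idTensor Φ M).submatrix (Prod.mk p) (Prod.mk q) = Φ (M.submatrix (Prod.mk p) (Prod.mk q)) :=
  rfl

lemma idTensor_conj [Fintype ι] [DecidableEq ι] [Fintype n] [CommSemiring R] [StarRing R]
    (Φ : Matrix n n R → Matrix n n R) (U V : Matrix n n R) (M : Matrix (ι × n) (ι × n) R) :
    idTensor (fun X => V * Φ (U * X * Uᴴ) * Vᴴ) M =
      ((1 : Matrix ι ι R) ⊗ₖ V) *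
        idTensor Φ (((1 : Matrix ι ι R) ⊗ₖ U) * M * ((1 : Matrix ι ι R) ⊗ₖ U)ᴴ) *
        ((1 : Matrix ι ι R) ⊗ₖ V)ᴴ := by
  refine ext_submatrix_prodMk fun p q => ?_
  rw [submatrix_one_kronecker_mul_mul_conjTranspose, submatrix_idTensor, submatrix_idTensor,
    submatrix_one_kronecker_mul_mul_conjTranspose]

end IdTensor

lemma mul_one_mul_conjTranspose_of_mem_unitaryGroup {n α : Type*} [Fintype n] [DecidableEq n]
    [CommRing α] [StarRing α] {U : Matrix n n α} (hU : U ∈ unitaryGroup n α) :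
    U * 1 * Uᴴ = 1 := by
  rw [mul_one, ← star_eq_conjTranspose, ← mem_unitaryGroup_iff.1 hU]

section CompletelyPositive

variable {N : ℕ} {Φ : Matrix (Fin N) (Fin N) ℂ → Matrix (Fin N) (Fin N) ℂ}

lemma completelyPositive_iff :
    CompletelyPositive Φ ↔ ∀ m : ℕ, 1 ≤ m → ∀ M : Matrix (Fin m × Fin N) (Fin m × Fin N) ℂ,
      M.PosSemidef → (idTensor Φ M).PosSemidef :=
  Iff.rfl

lemma CompletelyPositive.conj (hΦ : CompletelyPositive Φ) (U V : Matrix (Fin N) (Fin N) ℂ) :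
    CompletelyPositive fun X => V * Φ (U * X * Uᴴ) * Vᴴ := by
  rw [completelyPositive_iff] at hΦ ⊢
  intro m hm M hM
  rw [idTensor_conj]
  exact (hΦ m hm _ (hM.mul_mul_conjTranspose_same _)).mul_mul_conjTranspose_same _

lemma completelyPositive_conj_iff {U V : Matrix (Fin N) (Fin N) ℂ}
    (hU : U ∈ unitaryGroup (Fin N) ℂ) (hV : V ∈ unitaryGroup (Fin N) ℂ) :
    CompletelyPositive (fun X => V * Φ (U * X * Uᴴ) * Vᴴ) ↔ CompletelyPositive Φ := by
  refine ⟨fun h => ?_, fun h => h.conj U V⟩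
  convert h.conj Uᴴ Vᴴ using 1
  funext X
  have hU' := mem_unitaryGroup_iff.1 hU
  have hV' := mem_unitaryGroup_iff'.1 hV
  rw [star_eq_conjTranspose] at hU' hV'
  calc Φ X = (Vᴴ * V) * Φ ((U * Uᴴ) * X * (U * Uᴴ)) * (Vᴴ * V) := by rw [hU', hV']; simp
    _ = _ := by simp only [conjTranspose_conjTranspose, mul_assoc]

end CompletelyPositive

section PauliMaps

variable {Φ Ψ : Matrix (Fin 2) (Fin 2) ℂ →ₗ[ℂ] Matrix (Fin 2) (Fin 2) ℂ}

lemma map_pauliVec_eq_diagonal {d : Fin 3 → ℝ} (hΦ : ∀ j, Φ (pauli j.succ) = d j • pauli j.succ)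
    (r : Fin 3 → ℝ) : Φ (pauliVec r) = pauliVec (diagonal d *ᵥ r) := by
  simp [pauliVec, map_sum, LinearMap.map_smul_of_tower, hΦ, mulVec_diagonal, smul_smul, mul_comm]

lemma apply_eq_conj_of_rotatesPauli {U V : Matrix (Fin 2) (Fin 2) ℂ}
    {R S T : Matrix (Fin 3) (Fin 3) ℝ} (hU : U ∈ unitaryGroup (Fin 2) ℂ)
    (hV : V ∈ unitaryGroup (Fin 2) ℂ) (hUR : RotatesPauli U R) (hVS : RotatesPauli V S)
    (hΦ1 : Φ 1 = 1) (hΨ1 : Ψ 1 = 1) (hΦ : ∀ r, Φ (pauliVec r) = pauliVec (T *ᵥ r))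
    (hΨ : ∀ r, Ψ (pauliVec r) = pauliVec ((S * T * R) *ᵥ r)) (X : Matrix (Fin 2) (Fin 2) ℂ) :
    Ψ X = V * Φ (U * X * Uᴴ) * Vᴴ := by
  suffices h : Ψ = LinearMap.mulLeftRight ℂ (V, Vᴴ) ∘ₗ Φ ∘ₗ LinearMap.mulLeftRight ℂ (U, Uᴴ) by
    rw [h]; rfl
  refine LinearMap.ext_on_range span_pauli fun k => ?_
  simp only [LinearMap.comp_apply, LinearMap.mulLeftRight_apply]
  cases k using Fin.cases with
  | zero =>
    rw [pauli_zero, mul_one_mul_conjTranspose_of_mem_unitaryGroup hU, hΦ1,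
      mul_one_mul_conjTranspose_of_mem_unitaryGroup hV, hΨ1]
  | succ j => rw [← pauliVec_single, hΨ, hUR, hΦ, hVS, mulVec_mulVec, mulVec_mulVec]

end PauliMaps

theorem stmt_13 (A B : Matrix (Fin 3) (Fin 3) ℝ)
    (hA : Aᵀ * A = 1) (hAdet : A.det = 1) (hB : Bᵀ * B = 1) (hBdet : B.det = 1)
    (d : Fin 3 → ℝ) (M : Matrix (Fin 3) (Fin 3) ℝ) (hM : M = B * Matrix.diagonal d * A)
    (ΦM ΦD : Matrix (Fin 2) (Fin 2) ℂ →ₗ[ℂ] Matrix (Fin 2) (Fin 2) ℂ)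
    (hΦM0 : ΦM (pauli 0) = pauli 0)
    (hΦM : ∀ r : Fin 3 → ℝ,
      ΦM (∑ i : Fin 3, r i • pauli i.succ) = ∑ i : Fin 3, M.mulVec r i • pauli i.succ)
    (hΦD0 : ΦD (pauli 0) = pauli 0)
    (hΦD : ∀ j : Fin 3, ΦD (pauli j.succ) = d j • pauli j.succ) :
    CompletelyPositive ΦM ↔ CompletelyPositive ΦD := by
  obtain ⟨U, hU, hUA⟩ := exists_unitary_rotatesPauli
    (mem_specialOrthogonalGroup_iff.2 ⟨(mem_orthogonalGroup_iff' _ _).2 hA, hAdet⟩)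
  obtain ⟨V, hV, hVB⟩ := exists_unitary_rotatesPauli
    (mem_specialOrthogonalGroup_iff.2 ⟨(mem_orthogonalGroup_iff' _ _).2 hB, hBdet⟩)
  rw [pauli_zero] at hΦM0 hΦD0
  subst hM
  have hconj : ⇑ΦM = fun X => V * ΦD (U * X * Uᴴ) * Vᴴ :=
    funext <| apply_eq_conj_of_rotatesPauli hU hV hUA hVB hΦD0 hΦM0
      (map_pauliVec_eq_diagonal hΦD) hΦM
  rw [hconj, completelyPositive_conj_iff hU hV]
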